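/- (Rising Edge Lemma) Let H be a mesh in which every axis size is a prime number, and let σ_0 →^{allGather(i)} σ_1 →^{p} σ_2 be a two-step sequence of collective operations between well-formed distributed types over H, where p is an allToAll or allPermute step. Then there exist r ≤ 2, labels q_1, …, q_r each of which is an allToAll or allPermute, with at most one of them an allToAll, a well-formed type σ_1′, and a dimension index j, such that σ_0 →^{q_1} ⋯ →^{q_r} σ_1′ →^{allGather(j)} σ_2. -/

import Mathlib

/-! ## Meshes, index tuples, distributed dimensions and types -/

structure Mesh where
  axes : Finset String
  size : String → ℕ
  size_pos : ∀ x ∈ axes, 1 ≤ size x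

def Mesh.hasAxis (H : Mesh) (x : String) (n : ℕ) : Prop :=
  x ∈ H.axes ∧ H.size x = n

abbrev IndexTuple (H : Mesh) : Type :=
  {ι : String → ℕ // ∀ x : String, (x ∈ H.axes → ι x < H.size x) ∧ (x ∉ H.axes → ι x = 0)}

structure Dim where
  tile : ℕ
  axes : List String
  global : ℕ
deriving DecidableEq

abbrev DType := List Dim

def Mesh.WFDim (H : Mesh) (d : Dim) : Prop :=
  1 ≤ d.tile ∧ d.axes.Nodup ∧ (∀ x ∈ d.axes, x ∈ H.axes) ∧
    d.tile * (d.axes.map H.size).prod = d.global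

def Mesh.WFType (H : Mesh) (τ : DType) : Prop :=
  (∀ d ∈ τ, H.WFDim d) ∧ List.Pairwise (fun d e => ∀ x ∈ d.axes, x ∉ e.axes) τ

def globaltype (τ : DType) : List ℕ := τ.map Dim.global
def localtype (τ : DType) : List ℕ := τ.map Dim.tile
def localsize (τ : DType) : ℕ := (τ.map Dim.tile).prod

def typeAxes : DType → List String
  | [] => []
  | d :: τ => d.axes ++ typeAxes τ

/-- Base offset map of a distributed dimension, `⟦c{xs}n⟧_D`. -/
def dimOffset (H : Mesh) : ℕ → List String → (String → ℕ) → ℕ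
  | _, [], _ => 0
  | c, x :: xs, ι => c * ι x + dimOffset H (c * H.size x) xs ι

abbrev BOM (H : Mesh) : Type := IndexTuple H → List ℕ

/-- Base offset map of a distributed type, `⟦τ⟧_T`. -/
def typeOffset (H : Mesh) (τ : DType) : BOM H :=
  fun ι => τ.map (fun d => dimOffset H d.tile d.axes ι.val)

/-! ## Collective operations (high-level typing rules) -/

inductive Label where
  | allGather (i : ℕ)
  | dynSlice (i : ℕ) (x : String)
  | allToAll (i j : ℕ)
  | allPermute
deriving DecidableEq

inductive OpKind where
  | gather | slice | toAll | permute
deriving DecidableEq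

def Label.kind : Label → OpKind
  | .allGather _ => .gather
  | .dynSlice _ _ => .slice
  | .allToAll _ _ => .toAll
  | .allPermute => .permute

inductive Step (H : Mesh) : Label → DType → DType → Prop where
  | allGather {τ : DType} (i : ℕ) {c : ℕ} {x : String} {xs : List String} {s n : ℕ}
      (hwf : H.WFType τ) (hx : H.hasAxis x n)
      (hi : τ[i]? = some ⟨c, x :: xs, s⟩) :
      Step H (.allGather i) τ (τ.set i ⟨c * n, xs, s⟩)
  | dynSlice {τ : DType} (i : ℕ) (x : String) {c : ℕ} {xs : List String} {s n : ℕ}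
      (hwf : H.WFType τ) (hx : H.hasAxis x n) (hfresh : x ∉ typeAxes τ)
      (hi : τ[i]? = some ⟨c * n, xs, s⟩) :
      Step H (.dynSlice i x) τ (τ.set i ⟨c, x :: xs, s⟩)
  | allToAll {τ : DType} (i j : ℕ) {ci : ℕ} {x : String} {xsi : List String} {si cj : ℕ}
      {xsj : List String} {sj n : ℕ}
      (hwf : H.WFType τ) (hij : i ≠ j) (hx : H.hasAxis x n)
      (hi : τ[i]? = some ⟨ci, x :: xsi, si⟩)
      (hj : τ[j]? = some ⟨cj, xsj, sj⟩)
      (hdvd : n ∣ cj) :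
      Step H (.allToAll i j) τ ((τ.set i ⟨ci * n, xsi, si⟩).set j ⟨cj / n, x :: xsj, sj⟩)
  | allPermute {τ₁ τ₂ : DType}
      (hwf1 : H.WFType τ₁) (hwf2 : H.WFType τ₂)
      (hl : localtype τ₁ = localtype τ₂) (hg : globaltype τ₁ = globaltype τ₂) :
      Step H .allPermute τ₁ τ₂

/-! ## Sequences of collective operations -/

inductive CSeq (H : Mesh) : DType → DType → Type where
  | nil (τ : DType) : CSeq H τ τ
  | cons {τ₁ τ₂ τ₃ : DType} (p : Label) (h : Step H p τ₁ τ₂) (s : CSeq H τ₂ τ₃) : CSeq H τ₁ τ₃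

def CSeq.labels {H : Mesh} : {τ₁ τ₂ : DType} → CSeq H τ₁ τ₂ → List Label
  | _, _, .nil _ => []
  | _, _, .cons p _ s => p :: s.labels

def CSeq.typesList {H : Mesh} : {τ₁ τ₂ : DType} → CSeq H τ₁ τ₂ → List DType
  | _, _, .nil τ => [τ]
  | τ, _, .cons _ _ s => τ :: s.typesList

/-- The height 𝔥 of a sequence: the maximum `localsize` over all types in it. -/
def CSeq.height {H : Mesh} {τ₁ τ₂ : DType} (s : CSeq H τ₁ τ₂) : ℕ :=
  (s.typesList.map localsize).foldr max 0

/-- Cost of a single step with source `σ₁` and target `σ₂`. -/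
def stepCost (p : Label) (σ₁ σ₂ : DType) : ℕ :=
  match p with
  | .allGather _ => localsize σ₂
  | .dynSlice _ _ => 0
  | .allToAll _ _ => localsize σ₁
  | .allPermute => localsize σ₁

def CSeq.cost {H : Mesh} : {τ₁ τ₂ : DType} → CSeq H τ₁ τ₂ → ℕ
  | _, _, .nil _ => 0
  | _, _, @CSeq.cons _ σ₁ σ₂ _ p _ s => stepCost p σ₁ σ₂ + s.cost

/-- Normal form: labels matched by `dynSlice* {allToAll | allPermute}* allGather*`. -/
def NormalFormK (ks : List OpKind) : Prop :=
  ∃ a b c : List OpKind, ks = a ++ b ++ c ∧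
    (∀ k ∈ a, k = OpKind.slice) ∧
    (∀ k ∈ b, k = OpKind.toAll ∨ k = OpKind.permute) ∧
    (∀ k ∈ c, k = OpKind.gather)

/-! ## Weak collectives -/

/-- Equivalence of base offset maps. -/
def bomEquiv (H : Mesh) (β₁ β₂ : BOM H) : Prop :=
  ∃ π : Equiv.Perm (IndexTuple H), β₂ = β₁ ∘ π

/-- The weak collective relation `⟦τ₁⟧_E ▶^p ⟦τ₂⟧_E`, represented on types. -/
def WeakStep (H : Mesh) (p : Label) (τ₁ τ₂ : DType) : Prop :=
  p ≠ Label.allPermute ∧ H.WFType τ₁ ∧ H.WFType τ₂ ∧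
  ∃ σ₁ σ₂ : DType, Step H p σ₁ σ₂ ∧
    bomEquiv H (typeOffset H σ₁) (typeOffset H τ₁) ∧
    bomEquiv H (typeOffset H σ₂) (typeOffset H τ₂)

inductive WkSeq (H : Mesh) : DType → DType → Type where
  | nil (τ : DType) : WkSeq H τ τ
  | cons {τ₁ τ₂ τ₃ : DType} (p : Label) (h : WeakStep H p τ₁ τ₂) (s : WkSeq H τ₂ τ₃) :
      WkSeq H τ₁ τ₃

def WkSeq.labels {H : Mesh} : {τ₁ τ₂ : DType} → WkSeq H τ₁ τ₂ → List Label
  | _, _, .nil _ => []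
  | _, _, .cons p _ s => p :: s.labels

def WkSeq.typesList {H : Mesh} : {τ₁ τ₂ : DType} → WkSeq H τ₁ τ₂ → List DType
  | _, _, .nil τ => [τ]
  | τ, _, .cons _ _ s => τ :: s.typesList

def WkSeq.height {H : Mesh} {τ₁ τ₂ : DType} (s : WkSeq H τ₁ τ₂) : ℕ :=
  (s.typesList.map localsize).foldr max 0

def WkSeq.cost {H : Mesh} : {τ₁ τ₂ : DType} → WkSeq H τ₁ τ₂ → ℕ
  | _, _, .nil _ => 0
  | _, _, @WkSeq.cons _ σ₁ σ₂ _ p _ s => stepCost p σ₁ σ₂ + s.cost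

/-! ## Low-level MPI-style collectives on device assignments -/

abbrev DevMap (H : Mesh) (D : Type) := IndexTuple H ≃ D

structure DevAssign (H : Mesh) (D : Type) where
  dmap : DevMap H D
  bom : BOM H

inductive LLabel where
  | allGather (x : String)
  | allToAll (x : String) (j : ℕ)
  | dynSlice (i : ℕ) (x : String)
  | allPermute
deriving DecidableEq

def LLabel.kind : LLabel → OpKind
  | .allGather _ => .gather
  | .allToAll _ _ => .toAll
  | .dynSlice _ _ => .slice
  | .allPermute => .permute

inductive LStep (H : Mesh) (D : Type) : LLabel → DevAssign H D → DevAssign H D → Type where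
  | gather (τ : DType) (i : ℕ) (c : ℕ) (ys : List String) (x : String) (xs : List String)
      (s n : ℕ) (φ φ' : DevMap H D)
      (hwf : H.WFType τ) (hx : H.hasAxis x n)
      (hi : τ[i]? = some ⟨c, ys ++ x :: xs, s⟩)
      (hmap : typeOffset H (τ.set i ⟨c, x :: (ys ++ xs), s⟩) ∘ ⇑φ'.symm
            = typeOffset H τ ∘ ⇑φ.symm) :
      LStep H D (.allGather x) ⟨φ, typeOffset H τ⟩
        ⟨φ', typeOffset H (τ.set i ⟨c * n, ys ++ xs, s⟩)⟩
  | toAll (τ : DType) (i j : ℕ) (ci : ℕ) (ys : List String) (x : String) (xs : List String)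
      (si cj : ℕ) (xsj : List String) (sj n : ℕ) (φ φ' : DevMap H D)
      (hwf : H.WFType τ) (hij : i ≠ j) (hx : H.hasAxis x n)
      (hi : τ[i]? = some ⟨ci, ys ++ x :: xs, si⟩)
      (hj : τ[j]? = some ⟨cj, xsj, sj⟩)
      (hdvd : n ∣ cj)
      (hmap : typeOffset H (τ.set i ⟨ci, x :: (ys ++ xs), si⟩) ∘ ⇑φ'.symm
            = typeOffset H τ ∘ ⇑φ.symm) :
      LStep H D (.allToAll x j) ⟨φ, typeOffset H τ⟩
        ⟨φ', typeOffset H ((τ.set i ⟨ci * n, ys ++ xs, si⟩).set j ⟨cj / n, x :: xsj, sj⟩)⟩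
  | slice (τ : DType) (i : ℕ) (x : String) (c : ℕ) (xs : List String) (s n : ℕ)
      (φ : DevMap H D)
      (hwf : H.WFType τ) (hx : H.hasAxis x n) (hfresh : x ∉ typeAxes τ)
      (hi : τ[i]? = some ⟨c * n, xs, s⟩) :
      LStep H D (.dynSlice i x) ⟨φ, typeOffset H τ⟩ ⟨φ, typeOffset H (τ.set i ⟨c, x :: xs, s⟩)⟩
  | permute (τ : DType) (ρ : Equiv.Perm (IndexTuple H)) (β' : BOM H)
      (φ φ' : DevMap H D) (π : Equiv.Perm D)
      (hwf : H.WFType τ)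
      (hmap : β' ∘ ⇑φ'.symm = (typeOffset H τ ∘ ⇑ρ) ∘ ⇑φ.symm ∘ ⇑π) :
      LStep H D .allPermute ⟨φ, typeOffset H τ ∘ ⇑ρ⟩ ⟨φ', β'⟩

def LStep.cost {H : Mesh} {D : Type} :
    {l : LLabel} → {a b : DevAssign H D} → LStep H D l a b → ℕ
  | _, _, _, .gather τ i c ys x xs s n .. => localsize (τ.set i ⟨c * n, ys ++ xs, s⟩)
  | _, _, _, .toAll τ .. => localsize τ
  | _, _, _, .slice .. => 0
  | _, _, _, .permute τ .. => localsize τ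

inductive LoSeq (H : Mesh) (D : Type) : DevAssign H D → DevAssign H D → Type where
  | nil (a : DevAssign H D) : LoSeq H D a a
  | cons {a b c : DevAssign H D} (l : LLabel) (st : LStep H D l a b) (s : LoSeq H D b c) :
      LoSeq H D a c

def LoSeq.labels {H : Mesh} {D : Type} : {a b : DevAssign H D} → LoSeq H D a b → List LLabel
  | _, _, .nil _ => []
  | _, _, .cons l _ s => l :: s.labels

def LoSeq.states {H : Mesh} {D : Type} : {a b : DevAssign H D} → LoSeq H D a b → List (DevAssign H D)
  | _, _, .nil a => [a]
  | a, _, .cons _ _ s => a :: s.states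

def LoSeq.cost {H : Mesh} {D : Type} : {a b : DevAssign H D} → LoSeq H D a b → ℕ
  | _, _, .nil _ => 0
  | _, _, .cons _ st s => st.cost + s.cost

/-!
Write the final type `σ₂` as the `allGather` of its `dynSlice` along an unused axis of the
gathered size `n`; it then suffices to reach that slice from `σ₀` by exchange steps.
After an `allToAll` the gathered axis itself is still unused. After an `allPermute` some axis of
size `n` is unused because, the sizes being prime, unique factorisation makes the multiset of
sizes of the used axes a function of the local and global types, so `σ₂` uses as many axes of
size `n` as `σ₁`, which does not use the gathered one. For an `allToAll` moving an axis of size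
`n' ≠ n` into the gathered dimension, primality makes `n'` divide the tile of `σ₀` there, so the
`allToAll` can be performed before the gather.
-/

theorem List.set_eq_self_of_getElem?_eq {α : Type*} {l : List α} {k : ℕ} {a : α}
    (h : l[k]? = some a) : l.set k a = l := by
  obtain ⟨hk, rfl⟩ := List.getElem?_eq_some_iff.1 h
  exact List.set_getElem_self hk

theorem typeAxes_eq_flatMap (τ : DType) : typeAxes τ = τ.flatMap Dim.axes := by
  induction τ with
  | nil => rfl
  | cons d τ ih => simp [typeAxes, ih]

theorem coe_typeAxes_set_add {τ : DType} {k : ℕ} {d : Dim} (hk : τ[k]? = some d) (d' : Dim) :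
    (typeAxes (τ.set k d') : Multiset String) + d.axes = typeAxes τ + d'.axes := by
  induction τ generalizing k with
  | nil => simp at hk
  | cons e τ ih =>
    cases k with
    | zero =>
      obtain rfl : e = d := by simpa using hk
      simp only [List.set_cons_zero, typeAxes, ← Multiset.coe_add]
      abel
    | succ k =>
      simp only [List.set_cons_succ, typeAxes, ← Multiset.coe_add, add_assoc,
        ih (by simpa using hk)]

theorem localtype_set (τ : DType) (k : ℕ) (d : Dim) :
    localtype (τ.set k d) = (localtype τ).set k d.tile := List.map_set

theorem localtype_eq_iff {τ τ' : DType} :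
    localtype τ = localtype τ' ↔ ∀ k : ℕ, τ[k]?.map Dim.tile = τ'[k]?.map Dim.tile := by
  simp [localtype, List.ext_getElem?_iff]

theorem globaltype_set_eq {τ : DType} {k c : ℕ} {xs : List String} {s : ℕ}
    (hk : τ[k]? = some ⟨c, xs, s⟩) (c' : ℕ) (xs' : List String) :
    globaltype (τ.set k ⟨c', xs', s⟩) = globaltype τ := by
  rw [globaltype, List.map_set]
  exact List.set_eq_self_of_getElem?_eq (by simp [hk])

def Mesh.DimFits (H : Mesh) (d : Dim) : Prop :=
  1 ≤ d.tile ∧ (∀ x ∈ d.axes, x ∈ H.axes) ∧ d.tile * (d.axes.map H.size).prod = d.global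

theorem Mesh.wfType_iff {H : Mesh} {τ : DType} :
    H.WFType τ ↔ (∀ d ∈ τ, H.DimFits d) ∧ (typeAxes τ).Nodup := by
  rw [typeAxes_eq_flatMap, List.nodup_flatMap]
  constructor
  · rintro ⟨hd, hp⟩
    exact ⟨fun d h => ⟨(hd d h).1, (hd d h).2.2⟩, fun d h => (hd d h).2.1, hp⟩
  · rintro ⟨hd, hn, hp⟩
    exact ⟨fun d h => ⟨(hd d h).1, hn d h, (hd d h).2⟩, hp⟩

theorem Mesh.WFType.set {H : Mesh} {τ : DType} (hwf : H.WFType τ) {k : ℕ} {d : Dim}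
    (hd : H.DimFits d) (hnd : (typeAxes (τ.set k d)).Nodup) : H.WFType (τ.set k d) := by
  refine Mesh.wfType_iff.2 ⟨fun e he => ?_, hnd⟩
  rcases List.mem_or_eq_of_mem_set he with he | rfl
  · exact (Mesh.wfType_iff.1 hwf).1 e he
  · exact hd

theorem Mesh.hasAxis.pos {H : Mesh} {x : String} {n : ℕ} (hx : H.hasAxis x n) : 0 < n :=
  hx.2 ▸ H.size_pos x hx.1

theorem Mesh.DimFits.gather {H : Mesh} {c n s : ℕ} {x : String} {xs : List String}
    (hd : H.DimFits ⟨c, x :: xs, s⟩) (hx : H.hasAxis x n) : H.DimFits ⟨c * n, xs, s⟩ :=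
  ⟨Nat.mul_pos hd.1 hx.pos, fun y hy => hd.2.1 y (List.mem_cons_of_mem _ hy),
    by simpa [hx.2, mul_assoc] using hd.2.2⟩

theorem Mesh.DimFits.slice {H : Mesh} {c n s : ℕ} {x : String} {xs : List String}
    (hd : H.DimFits ⟨c, xs, s⟩) (hx : H.hasAxis x n) (hn : n ∣ c) :
    H.DimFits ⟨c / n, x :: xs, s⟩ := by
  obtain ⟨c', rfl⟩ := hn
  have hn : 0 < n := Nat.pos_of_mul_pos_right hd.1
  refine ⟨?_, ?_, ?_⟩
  · exact (Nat.mul_div_cancel_left c' hn).symm ▸ Nat.pos_of_mul_pos_left hd.1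
  · simpa [hx.1] using hd.2.1
  · simpa [Nat.mul_div_cancel_left _ hn, hx.2, mul_assoc, mul_left_comm] using hd.2.2

theorem Mesh.WFType.dimFits {H : Mesh} {τ : DType} (hwf : H.WFType τ) {k : ℕ} {d : Dim}
    (hk : τ[k]? = some d) : H.DimFits d :=
  (Mesh.wfType_iff.1 hwf).1 d (List.mem_of_getElem? hk)

theorem coe_typeAxes_eq_cons_set {τ : DType} {k c : ℕ} {x : String} {xs : List String} {s : ℕ}
    (hk : τ[k]? = some ⟨c, x :: xs, s⟩) (c' s' : ℕ) :
    (typeAxes τ : Multiset String) = x ::ₘ typeAxes (τ.set k ⟨c', xs, s'⟩) := by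
  apply add_right_cancel (b := (xs : Multiset String))
  rw [← coe_typeAxes_set_add hk ⟨c', xs, s'⟩]
  simp only [← Multiset.cons_coe, Multiset.add_cons, Multiset.cons_add]

theorem Mesh.WFType.not_mem_typeAxes_set {H : Mesh} {τ : DType} (hwf : H.WFType τ) {k c : ℕ}
    {x : String} {xs : List String} {s : ℕ} (hk : τ[k]? = some ⟨c, x :: xs, s⟩)
    (c' s' : ℕ) : x ∉ typeAxes (τ.set k ⟨c', xs, s'⟩) := by
  have hnd := (Mesh.wfType_iff.1 hwf).2
  rw [← Multiset.coe_nodup, coe_typeAxes_eq_cons_set hk c' s', Multiset.nodup_cons] at hnd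
  exact hnd.1

theorem Step.coe_typeAxes_of_allToAll {H : Mesh} {i j : ℕ} {τ τ' : DType}
    (h : Step H (.allToAll i j) τ τ') : (typeAxes τ' : Multiset String) = typeAxes τ := by
  cases h with
  | @allToAll _ i j ci x xsi si cj xsj sj n _ hij _ hi hj _ =>
    rw [coe_typeAxes_eq_cons_set hi (ci * n) si]
    apply add_right_cancel (b := (xsj : Multiset String))
    have hj' : (τ.set i ⟨ci * n, xsi, si⟩)[j]? = some ⟨cj, xsj, sj⟩ := by
      rwa [List.getElem?_set_ne hij]
    rw [coe_typeAxes_set_add hj' ⟨cj / n, x :: xsj, sj⟩]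
    simp only [← Multiset.cons_coe, Multiset.add_cons, Multiset.cons_add]

theorem Step.globaltype_eq {H : Mesh} {p : Label} {τ τ' : DType} (h : Step H p τ τ') :
    globaltype τ = globaltype τ' := by
  cases h with
  | allGather _ _ _ hi => exact (globaltype_set_eq hi _ _).symm
  | dynSlice _ _ _ _ _ hi => exact (globaltype_set_eq hi _ _).symm
  | allToAll _ _ _ hij _ hi hj _ =>
    rw [globaltype_set_eq (by rwa [List.getElem?_set_ne hij]), globaltype_set_eq hi]
  | allPermute _ _ _ hg => exact hg

theorem Step.wfType_source {H : Mesh} {p : Label} {τ τ' : DType} (h : Step H p τ τ') :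
    H.WFType τ := by
  cases h <;> assumption

theorem Step.wfType_target {H : Mesh} {p : Label} {τ τ' : DType} (h : Step H p τ τ') :
    H.WFType τ' := by
  cases h with
  | allGather _ hwf hx hi =>
    refine hwf.set ((hwf.dimFits hi).gather hx) ?_
    have hnd := (Mesh.wfType_iff.1 hwf).2
    rw [← Multiset.coe_nodup, coe_typeAxes_eq_cons_set hi _ _, Multiset.nodup_cons] at hnd
    exact hnd.2
  | dynSlice _ x hwf hx hfresh hi =>
    have hd := (hwf.dimFits hi).slice hx (dvd_mul_left _ _)
    rw [Nat.mul_div_cancel _ hx.pos] at hd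
    refine hwf.set hd ?_
    rw [← Multiset.coe_nodup, coe_typeAxes_eq_cons_set (List.getElem?_set_self
      (List.getElem?_eq_some_iff.1 hi).1) _ _, List.set_set, List.set_eq_self_of_getElem?_eq hi]
    exact Multiset.nodup_cons.2 ⟨hfresh, (Mesh.wfType_iff.1 hwf).2⟩
  | allToAll i j hwf hij hx hi hj hdvd =>
    have hM := (Step.allToAll i j hwf hij hx hi hj hdvd).coe_typeAxes_of_allToAll
    refine Mesh.wfType_iff.2 ⟨fun d hd => ?_, ?_⟩
    · rcases List.mem_or_eq_of_mem_set hd with hd | rfl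
      · rcases List.mem_or_eq_of_mem_set hd with hd | rfl
        · exact (Mesh.wfType_iff.1 hwf).1 d hd
        · exact (hwf.dimFits hi).gather hx
      · exact (hwf.dimFits hj).slice hx hdvd
    · rw [← Multiset.coe_nodup, hM]
      exact (Mesh.wfType_iff.1 hwf).2
  | allPermute _ hwf₂ _ _ => exact hwf₂

theorem Step.allGather_of_dynSlice {H : Mesh} {k : ℕ} {y : String} {τ τ' : DType}
    (h : Step H (.dynSlice k y) τ τ') : Step H (.allGather k) τ' τ := by
  have hwf' := h.wfType_target
  cases h with
  | dynSlice k _ _ hy _ hk =>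
    have hgather := Step.allGather k hwf' hy
      (List.getElem?_set_self (List.getElem?_eq_some_iff.1 hk).1)
    rwa [List.set_set, List.set_eq_self_of_getElem?_eq hk] at hgather

theorem map_size_typeAxes_perm {H : Mesh} (hP : ∀ x ∈ H.axes, (H.size x).Prime) {τ : DType}
    (hwf : H.WFType τ) :
    ((typeAxes τ).map H.size).Perm
      (((globaltype τ).zip (localtype τ)).flatMap fun p => (p.1 / p.2).primeFactorsList) := by
  rw [globaltype, localtype, List.zip_map', List.flatMap_map, typeAxes_eq_flatMap,
    List.map_flatMap]
  refine List.Perm.flatMap_left _ fun d hd => Nat.primeFactorsList_unique ?_ ?_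
  · have hfit := (Mesh.wfType_iff.1 hwf).1 d hd
    exact Nat.eq_div_of_mul_eq_right (by have := hfit.1; omega) hfit.2.2
  · intro p hp
    obtain ⟨a, ha, rfl⟩ := List.mem_map.1 hp
    exact hP a (((Mesh.wfType_iff.1 hwf).1 d hd).2.1 a ha)

theorem exists_fresh_axis_of_allPermute {H : Mesh} (hP : ∀ x ∈ H.axes, (H.size x).Prime)
    {τ τ' : DType} (h : Step H .allPermute τ τ') {x : String} {m : ℕ} (hx : H.hasAxis x m)
    (hfresh : x ∉ typeAxes τ) : ∃ y, H.hasAxis y m ∧ y ∉ typeAxes τ' := by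
  classical
  cases h with | allPermute hwf hwf' hl hg => ?_
  by_contra! hall
  let S := H.axes.filter (H.size · = m)
  let A := (typeAxes τ).filter (H.size · = m)
  let A' := (typeAxes τ').filter (H.size · = m)
  have hlen : A.length = A'.length := by
    have hperm := (map_size_typeAxes_perm hP hwf).trans
      (hl ▸ hg ▸ (map_size_typeAxes_perm hP hwf').symm)
    simpa [List.filter_map, A, A', Function.comp_def] using (hperm.filter (· = m)).length_eq
  have hA : A.toFinset ⊆ S.erase x := by
    intro y hy
    simp only [List.mem_toFinset, List.mem_filter, decide_eq_true_eq, A] at hy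
    refine Finset.mem_erase.2 ⟨fun h => hfresh (h ▸ hy.1), Finset.mem_filter.2 ⟨?_, hy.2⟩⟩
    obtain ⟨d, hd, hyd⟩ := List.mem_flatMap.1 (typeAxes_eq_flatMap τ ▸ hy.1)
    exact ((Mesh.wfType_iff.1 hwf).1 d hd).2.1 y hyd
  have hA' : S ⊆ A'.toFinset := by
    intro y hy
    obtain ⟨hyH, hym⟩ := Finset.mem_filter.1 hy
    simpa [A', hym] using hall y ⟨hyH, hym⟩
  have hAnd : A.Nodup := (Mesh.wfType_iff.1 hwf).2.filter _
  refine (?_ : A.length < A'.length).ne hlen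
  calc A.length = A.toFinset.card := (List.toFinset_card_of_nodup hAnd).symm
    _ ≤ (S.erase x).card := Finset.card_le_card hA
    _ < S.card := Finset.card_erase_lt_of_mem (Finset.mem_filter.2 hx)
    _ ≤ A'.toFinset.card := Finset.card_le_card hA'
    _ ≤ A'.length := List.toFinset_card_le A'

theorem Step.allPermute_set_perm {H : Mesh} {τ : DType} (hwf : H.WFType τ) {k c s : ℕ}
    {xs ys : List String} (hk : τ[k]? = some ⟨c, xs, s⟩) (hperm : xs.Perm ys) :
    Step H .allPermute τ (τ.set k ⟨c, ys, s⟩) := by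
  have hd := hwf.dimFits hk
  have hfit : H.DimFits ⟨c, ys, s⟩ :=
    ⟨hd.1, fun y hy => hd.2.1 y (hperm.mem_iff.2 hy), (hperm.map H.size).prod_eq ▸ hd.2.2⟩
  have hM : (typeAxes (τ.set k ⟨c, ys, s⟩) : Multiset String) = typeAxes τ := by
    apply add_right_cancel (b := (xs : Multiset String))
    rw [coe_typeAxes_set_add hk, Multiset.coe_eq_coe.2 hperm]
  refine .allPermute hwf (hwf.set hfit ?_) (localtype_eq_iff.2 fun j => ?_)
    (globaltype_set_eq hk _ _).symm
  · rw [← Multiset.coe_nodup, hM]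
    exact (Mesh.wfType_iff.1 hwf).2
  · rw [List.getElem?_set]
    split_ifs <;> simp_all

def ShortExchange (H : Mesh) (σ τ : DType) : Prop :=
  ∃ s : CSeq H σ τ, s.labels.length ≤ 2 ∧
    (∀ l ∈ s.labels, l.kind = OpKind.toAll ∨ l.kind = OpKind.permute) ∧
    (s.labels.filter (fun l => decide (l.kind = OpKind.toAll))).length ≤ 1

section ShortExchange

variable {H : Mesh} {σ ρ τ : DType} {i j : ℕ}

theorem ShortExchange.of_allPermute (h : Step H .allPermute σ τ) : ShortExchange H σ τ :=
  ⟨.cons _ h (.nil _), by simp [CSeq.labels, Label.kind]⟩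

theorem ShortExchange.of_allToAll (h : Step H (.allToAll i j) σ τ) : ShortExchange H σ τ :=
  ⟨.cons _ h (.nil _), by simp [CSeq.labels, Label.kind]⟩

theorem ShortExchange.of_allPermute_allToAll (h₁ : Step H .allPermute σ ρ)
    (h₂ : Step H (.allToAll i j) ρ τ) : ShortExchange H σ τ :=
  ⟨.cons _ h₁ (.cons _ h₂ (.nil _)), by simp [CSeq.labels, Label.kind]⟩

theorem ShortExchange.of_allToAll_allPermute (h₁ : Step H (.allToAll i j) σ ρ)
    (h₂ : Step H .allPermute ρ τ) : ShortExchange H σ τ :=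
  ⟨.cons _ h₁ (.cons _ h₂ (.nil _)), by simp [CSeq.labels, Label.kind]⟩

end ShortExchange

theorem Step.swap_allGather_allPermute {H : Mesh} (hP : ∀ x ∈ H.axes, (H.size x).Prime)
    {i : ℕ} {σ₀ σ₁ σ₂ : DType} (h₁ : Step H (.allGather i) σ₀ σ₁)
    (h₂ : Step H .allPermute σ₁ σ₂) :
    ∃ σ₁', Step H .allPermute σ₀ σ₁' ∧ Step H (.allGather i) σ₁' σ₂ := by
  have hg := h₁.globaltype_eq.trans h₂.globaltype_eq
  cases h₁ with
  | @allGather _ i c x xs s n hwf₀ hx hi =>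
    obtain ⟨y, hy, hfresh⟩ :=
      exists_fresh_axis_of_allPermute hP h₂ hx (hwf₀.not_mem_typeAxes_set hi _ _)
    cases h₂ with | allPermute _ hwf₂ hl₂ hg₂ => ?_
    have hlt : i < σ₀.length := (List.getElem?_eq_some_iff.1 hi).1
    have hσ₂ : ∃ xs₂, σ₂[i]? = some ⟨c * n, xs₂, s⟩ := by
      have ht := congrArg (·[i]?) hl₂
      have hs := congrArg (·[i]?) hg₂
      simp only [localtype, globaltype, List.map_set, List.getElem?_map] at ht hs
      rw [List.getElem?_set_self (by simpa using hlt)] at ht hs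
      obtain ⟨⟨_, xs₂, s₂⟩, hd, rfl⟩ : ∃ d, σ₂[i]? = some d ∧ d.tile = c * n := by
        simpa [eq_comm] using ht
      obtain rfl : s = s₂ := by simpa [hd] using hs
      exact ⟨xs₂, hd⟩
    obtain ⟨xs₂, hσ₂⟩ := hσ₂
    have hslice := Step.dynSlice i y hwf₂ hy hfresh hσ₂
    refine ⟨_, .allPermute hwf₀ hslice.wfType_target ?_ (hg.trans hslice.globaltype_eq),
      hslice.allGather_of_dynSlice⟩
    rw [localtype_set, ← hl₂, localtype_set, List.set_set]
    exact (List.set_eq_self_of_getElem?_eq (by simp [localtype, hi])).symm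

theorem Step.swap_allGather_allToAll_of_ne {H : Mesh} {i i' j' : ℕ} {σ₀ σ₁ σ₂ : DType}
    (h₁ : Step H (.allGather i) σ₀ σ₁) (h₂ : Step H (.allToAll i' j') σ₁ σ₂)
    (hi' : i' ≠ i) (hj' : j' ≠ i) :
    ∃ σ₁', Step H (.allToAll i' j') σ₀ σ₁' ∧ Step H (.allGather i) σ₁' σ₂ := by
  cases h₁ with | allGather i hwf₀ hx hi => ?_
  cases h₂ with | allToAll i' j' _ hij hx' hi₁ hj₁ hdvd => ?_
  rw [List.getElem?_set_ne hi'.symm] at hi₁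
  rw [List.getElem?_set_ne hj'.symm] at hj₁
  have ha2a := Step.allToAll i' j' hwf₀ hij hx' hi₁ hj₁ hdvd
  have hgather := Step.allGather i ha2a.wfType_target hx
    (by rwa [List.getElem?_set_ne hj', List.getElem?_set_ne hi'])
  rw [List.set_comm _ _ hj', List.set_comm _ _ hi'] at hgather
  exact ⟨_, ha2a, hgather⟩

theorem Step.swap_allGather_allToAll_source {H : Mesh} {i j : ℕ} {σ₀ σ₁ σ₂ : DType}
    (h₁ : Step H (.allGather i) σ₀ σ₁) (h₂ : Step H (.allToAll i j) σ₁ σ₂) :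
    ∃ ρ σ₁', Step H .allPermute σ₀ ρ ∧ Step H (.allToAll i j) ρ σ₁' ∧
      Step H (.allGather i) σ₁' σ₂ := by
  cases h₁ with | @allGather _ i c x xs s n hwf₀ hx hi => ?_
  have hlt := (List.getElem?_eq_some_iff.1 hi).1
  cases h₂ with | @allToAll _ i j ci x' xsi si cj xsj sj n' _ hij hx' hi₁ hj₁ hdvd => ?_
  rw [List.getElem?_set_self hlt] at hi₁
  obtain ⟨rfl, rfl, rfl⟩ : c * n = ci ∧ xs = x' :: xsi ∧ s = si := by simpa using hi₁
  rw [List.getElem?_set_ne hij] at hj₁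
  have hperm := Step.allPermute_set_perm hwf₀ hi (List.Perm.swap x' x xsi)
  have ha2a := Step.allToAll i j hperm.wfType_target hij hx'
    (List.getElem?_set_self (by simpa using hlt)) (by rwa [List.getElem?_set_ne hij]) hdvd
  rw [List.set_set] at ha2a
  have hgather := Step.allGather i ha2a.wfType_target hx
    (by rw [List.getElem?_set_ne hij.symm, List.getElem?_set_self (by simpa using hlt)])
  rw [List.set_comm _ _ hij.symm, List.set_set, mul_right_comm] at hgather
  rw [List.set_set]
  exact ⟨_, _, hperm, ha2a, hgather⟩

theorem Step.swap_allGather_allToAll_target {H : Mesh} (hP : ∀ x ∈ H.axes, (H.size x).Prime)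
    {i i' : ℕ} {σ₀ σ₁ σ₂ : DType}
    (h₁ : Step H (.allGather i) σ₀ σ₁) (h₂ : Step H (.allToAll i' i) σ₁ σ₂) :
    ∃ σ₁' j, ShortExchange H σ₀ σ₁' ∧ Step H (.allGather j) σ₁' σ₂ := by
  have hwf₂ := h₂.wfType_target
  have hM := h₂.coe_typeAxes_of_allToAll
  have hg := h₁.globaltype_eq.trans h₂.globaltype_eq
  cases h₁ with | @allGather _ i c x xs s n hwf₀ hx hi => ?_
  have hfresh : x ∉ typeAxes σ₂ := by
    rw [← Multiset.mem_coe, hM, Multiset.mem_coe]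
    exact hwf₀.not_mem_typeAxes_set hi _ _
  have hlt := (List.getElem?_eq_some_iff.1 hi).1
  cases h₂ with | @allToAll _ i' i ci x' xsi si cj xsj sj n' _ hij hx' hi₁ hj₁ hdvd => ?_
  rw [List.getElem?_set_self hlt] at hj₁
  obtain ⟨rfl, rfl, rfl⟩ : c * n = cj ∧ xs = xsj ∧ s = sj := by simpa using hj₁
  rw [List.getElem?_set_ne hij.symm] at hi₁
  rcases eq_or_ne n' n with rfl | hnn'
  · have hslice := Step.dynSlice (c := ci) (xs := xsi) (s := si) i' x hwf₂ hx hfresh (by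
      rw [List.getElem?_set_ne hij.symm,
        List.getElem?_set_self (by simpa using (List.getElem?_eq_some_iff.1 hi₁).1)])
    refine ⟨_, i', .of_allPermute (.allPermute hwf₀ hslice.wfType_target ?_
      (hg.trans hslice.globaltype_eq)), hslice.allGather_of_dynSlice⟩
    refine localtype_eq_iff.2 fun k => ?_
    simp only [List.getElem?_set]
    split_ifs <;> simp_all [Nat.mul_div_cancel _ hx.pos]
  · have hn' := hx'.pos
    obtain ⟨c', rfl⟩ : n' ∣ c := by
      refine ((Nat.coprime_primes ?_ ?_).2 hnn').dvd_of_dvd_mul_right hdvd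
      exacts [hx'.2 ▸ hP x' hx'.1, hx.2 ▸ hP x hx.1]
    have ha2a := Step.allToAll i' i hwf₀ hij hx' hi₁ hi (dvd_mul_right n' c')
    have hslice := Step.dynSlice (c := c') (xs := x' :: xs) (s := s) i x hwf₂ hx hfresh (by
      rw [List.getElem?_set_self (by simpa using hlt), mul_assoc, Nat.mul_div_cancel_left _ hn'])
    refine ⟨_, i, .of_allToAll_allPermute ha2a (.allPermute ha2a.wfType_target
      hslice.wfType_target ?_ (ha2a.globaltype_eq.symm.trans (hg.trans hslice.globaltype_eq))),
      hslice.allGather_of_dynSlice⟩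
    refine localtype_eq_iff.2 fun k => ?_
    simp only [List.getElem?_set]
    split_ifs <;> simp_all [Nat.mul_div_cancel_left _ hn']
    omega

theorem Step.swap_allGather_allToAll {H : Mesh} (hP : ∀ x ∈ H.axes, (H.size x).Prime)
    {i i' j' : ℕ} {σ₀ σ₁ σ₂ : DType}
    (h₁ : Step H (.allGather i) σ₀ σ₁) (h₂ : Step H (.allToAll i' j') σ₁ σ₂) :
    ∃ σ₁' j, ShortExchange H σ₀ σ₁' ∧ Step H (.allGather j) σ₁' σ₂ := by
  rcases eq_or_ne i' i with rfl | hi'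
  · obtain ⟨ρ, σ₁', hperm, ha2a, hgather⟩ := h₁.swap_allGather_allToAll_source h₂
    exact ⟨σ₁', i', .of_allPermute_allToAll hperm ha2a, hgather⟩
  rcases eq_or_ne j' i with rfl | hj'
  · exact h₁.swap_allGather_allToAll_target hP h₂
  obtain ⟨σ₁', ha2a, hgather⟩ := h₁.swap_allGather_allToAll_of_ne h₂ hi' hj'
  exact ⟨σ₁', i, .of_allToAll ha2a, hgather⟩

/-- Rising Edge Lemma. -/
theorem stmt3 (H : Mesh) (hP : ∀ x ∈ H.axes, (H.size x).Prime)
    (σ₀ σ₁ σ₂ : DType) (i : ℕ) (p : Label)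
    (hp : p.kind = OpKind.toAll ∨ p.kind = OpKind.permute)
    (h1 : Step H (.allGather i) σ₀ σ₁) (h2 : Step H p σ₁ σ₂) :
    ∃ (σ₁' : DType) (j : ℕ) (s : CSeq H σ₀ σ₁'),
      H.WFType σ₁' ∧
      s.labels.length ≤ 2 ∧
      (∀ l ∈ s.labels, l.kind = OpKind.toAll ∨ l.kind = OpKind.permute) ∧
      (s.labels.filter (fun l => decide (l.kind = OpKind.toAll))).length ≤ 1 ∧
      Step H (.allGather j) σ₁' σ₂ := by
  obtain ⟨σ₁', j, ⟨s, hs⟩, hgather⟩ :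
      ∃ σ₁' j, ShortExchange H σ₀ σ₁' ∧ Step H (.allGather j) σ₁' σ₂ := by
    rcases p with _ | _ | ⟨i', j'⟩ | _
    · simp [Label.kind] at hp
    · simp [Label.kind] at hp
    · exact h1.swap_allGather_allToAll hP h2
    · obtain ⟨σ₁', hperm, hgather⟩ := h1.swap_allGather_allPermute hP h2
      exact ⟨σ₁', i, .of_allPermute hperm, hgather⟩
  exact ⟨σ₁', j, s, hgather.wfType_source, hs.1, hs.2.1, hs.2.2, hgather⟩
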